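/- arXiv:2601.07286 — 3 statements merged into one kernel-verified Lean document; each statement's English description precedes it below -/
import Mathlib

section
/- Let F be an n×n Hermitian matrix, X an n×n Hermitian matrix, and E an orthogonal projection of rank r onto a subspace spanned by eigenvectors of F corresponding to its r largest eigenvalues (counted with multiplicity). Then Tr(E[X,[X,F]]) ≥ 0. -/
open Matrix BigOperators
open scoped ComplexOrder

/-- `descSort f` lists the values of `f` in nonincreasing order:
`descSort f j` is the `j`-th largest value of `f`. -/
noncomputable def descSort {n : ℕ} (f : Fin n → ℝ) : Fin n → ℝ :=
  f ∘ Tuple.sort (fun i => -(f i))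

/-- The singular values of a complex square matrix, in nonincreasing order. -/
noncomputable def singVals {n : ℕ} (Y : Matrix (Fin n) (Fin n) ℂ) : Fin n → ℝ :=
  descSort (fun i => Real.sqrt ((Matrix.posSemidef_conjTranspose_mul_self Y).1.eigenvalues i))

/-- The orthogonal (spectral) projection onto the span of the eigenvectors of `F`
indexed by the set `s`, in an orthonormal eigenbasis of the Hermitian matrix `F`. -/
noncomputable def specProj {n : ℕ} {F : Matrix (Fin n) (Fin n) ℂ} (hF : F.IsHermitian)
    (s : Finset (Fin n)) : Matrix (Fin n) (Fin n) ℂ :=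
  (hF.eigenvectorUnitary : Matrix (Fin n) (Fin n) ℂ) *
    Matrix.diagonal (fun i => if i ∈ s then (1:ℂ) else 0) *
    (hF.eigenvectorUnitary : Matrix (Fin n) (Fin n) ℂ)ᴴ

/-! In an orthonormal eigenbasis `U` of `F`, with `Y = UᴴXU`, `D = diag(λ)` and `P` the diagonal
indicator of `s`, the trace becomes `Tr(P[Y,[Y,D]]) = ∑_{i ∈ s} ∑_j 2|Y_ij|²(λ_i - λ_j)`.
The terms with `j ∈ s` cancel in pairs, and those with `j ∉ s` are nonnegative since
`λ_j ≤ λ_i`. -/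

section

variable {ι R : Type*} [Fintype ι] [DecidableEq ι]

theorem Matrix.trace_conjStarAlgAut [CommSemiring R] [StarRing R]
    (u : unitary (Matrix ι ι R)) (M : Matrix ι ι R) :
    trace (Unitary.conjStarAlgAut R _ u M) = trace M := by
  rw [Unitary.conjStarAlgAut_apply, trace_mul_cycle, Unitary.coe_star_mul_self, one_mul]

theorem Matrix.lie_diagonal_apply [CommRing R] (Y : Matrix ι ι R) (d : ι → R) (i j : ι) :
    ⁅Y, diagonal d⁆ i j = Y i j * (d j - d i) := by
  simp only [Ring.lie_def, sub_apply, mul_diagonal, diagonal_mul]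
  ring

theorem Matrix.lie_lie_diagonal_apply_self [CommRing R] (Y : Matrix ι ι R) (d : ι → R) (i : ι) :
    ⁅Y, ⁅Y, diagonal d⁆⁆ i i = ∑ j, 2 * (Y i j * Y j i) * (d i - d j) := by
  rw [Ring.lie_def, sub_apply, mul_apply, mul_apply, ← Finset.sum_sub_distrib]
  refine Finset.sum_congr rfl fun j _ => ?_
  rw [lie_diagonal_apply, lie_diagonal_apply]
  ring

theorem Matrix.trace_diagonal_mul [Semiring R] (p : ι → R) (M : Matrix ι ι R) :
    trace (diagonal p * M) = ∑ i, p i * M i i := by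
  simp only [trace, diag_apply, diagonal_mul]

end

theorem Matrix.IsHermitian.apply_mul_apply_symm {ι : Type*} {Y : Matrix ι ι ℂ} (hY : Y.IsHermitian)
    (i j : ι) :
    Y i j * Y j i = Complex.normSq (Y i j) := by
  rw [← hY.apply j i, RCLike.star_def, Complex.mul_conj]

theorem Matrix.IsHermitian.re_trace_diagonal_indicator_mul_lie_lie {ι : Type*} [Fintype ι]
    [DecidableEq ι] {Y : Matrix ι ι ℂ} (hY : Y.IsHermitian) (s : Finset ι) (d : ι → ℝ) :
    (trace (diagonal (fun i => if i ∈ s then (1 : ℂ) else 0) *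
      ⁅Y, ⁅Y, diagonal (fun i => (d i : ℂ))⁆⁆)).re =
      ∑ i ∈ s, ∑ j, 2 * Complex.normSq (Y i j) * (d i - d j) := by
  simp only [trace_diagonal_mul, lie_lie_diagonal_apply_self, hY.apply_mul_apply_symm,
    ite_mul, one_mul, zero_mul, ← Finset.sum_filter, Finset.filter_mem_eq_inter,
    Finset.univ_inter, Complex.re_sum]
  norm_cast

theorem Finset.sum_sum_mul_sub_nonneg {ι R : Type*} [Fintype ι] [DecidableEq ι]
    [CommRing R] [LinearOrder R] [IsStrictOrderedRing R]
    {a : ι → ι → R} (ha : ∀ i j, 0 ≤ a i j) (ha_symm : ∀ i j, a i j = a j i)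
    {d : ι → R} {s : Finset ι} (hd : ∀ i ∈ s, ∀ j ∉ s, d j ≤ d i) :
    0 ≤ ∑ i ∈ s, ∑ j, a i j * (d i - d j) := by
  have hinner : ∑ i ∈ s, ∑ j ∈ s, a i j * (d i - d j) = 0 := by
    have hneg : ∑ i ∈ s, ∑ j ∈ s, a i j * (d i - d j) =
        -∑ i ∈ s, ∑ j ∈ s, a i j * (d i - d j) := by
      conv_lhs => rw [Finset.sum_comm]
      simp only [← Finset.sum_neg_distrib]
      refine sum_congr rfl fun i _ => sum_congr rfl fun j _ => ?_
      rw [ha_symm i j]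
      ring
    linarith
  simp only [← Finset.sum_add_sum_compl s, Finset.sum_add_distrib, hinner, zero_add]
  exact sum_nonneg fun i hi => sum_nonneg fun j hj =>
    mul_nonneg (ha i j) (sub_nonneg.2 (hd i hi j (mem_compl.1 hj)))

theorem trace_proj_double_comm_nonneg_general {n : ℕ} {F X : Matrix (Fin n) (Fin n) ℂ}
    (hF : F.IsHermitian) (hX : X.IsHermitian) (s : Finset (Fin n))
    (hmax : ∀ i ∈ s, ∀ j ∉ s, hF.eigenvalues j ≤ hF.eigenvalues i) :
    0 ≤ (Matrix.trace (specProj hF s *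
      (X * (X * F - F * X) - (X * F - F * X) * X))).re := by
  set φ := Unitary.conjStarAlgAut ℂ _ hF.eigenvectorUnitary
  set P : Matrix (Fin n) (Fin n) ℂ := diagonal fun i => if i ∈ s then 1 else 0
  set D : Matrix (Fin n) (Fin n) ℂ := diagonal fun i => (hF.eigenvalues i : ℂ)
  set Y := φ.symm X
  have hXY : X = φ Y := (φ.apply_symm_apply X).symm
  have hFD : F = φ D := hF.spectral_theorem
  have hY : Y.IsHermitian := (hX.isSelfAdjoint.map φ.symm).isHermitian
  calc 0 ≤ ∑ i ∈ s, ∑ j, 2 * Complex.normSq (Y i j) * (hF.eigenvalues i - hF.eigenvalues j) :=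
        Finset.sum_sum_mul_sub_nonneg (fun i j => mul_nonneg zero_le_two (Complex.normSq_nonneg _))
          (fun i j => by rw [← hY.apply i j, RCLike.star_def, Complex.normSq_conj]) hmax
    _ = (trace (P * ⁅Y, ⁅Y, D⁆⁆)).re := (hY.re_trace_diagonal_indicator_mul_lie_lie s _).symm
    _ = (trace (φ (P * ⁅Y, ⁅Y, D⁆⁆))).re := by rw [trace_conjStarAlgAut]
    _ = (trace (φ P * ⁅φ Y, ⁅φ Y, φ D⁆⁆)).re := by simp only [Ring.lie_def, map_sub, map_mul]
    _ = _ := by rw [← hXY, ← hFD]; rfl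

/-- If `E` is a spectral projection of the Hermitian matrix `F` associated with its
`r` largest eigenvalues, and `X` is Hermitian, then `Tr(E[X,[X,F]]) ≥ 0`. -/
theorem trace_proj_double_comm_nonneg {n r : ℕ} {F X : Matrix (Fin n) (Fin n) ℂ}
    (hF : F.IsHermitian) (hX : X.IsHermitian) (s : Finset (Fin n)) (hs : s.card = r)
    (hmax : ∀ i ∈ s, ∀ j ∉ s, hF.eigenvalues j ≤ hF.eigenvalues i) :
    0 ≤ (Matrix.trace (specProj hF s *
      (X * (X * F - F * X) - (X * F - F * X) * X))).re :=
  trace_proj_double_comm_nonneg_general hF hX s hmax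
end

section
/- Let A, B be n×n Hermitian matrices, H = A + B, X = A - B, Q₃ = A³ + 3A²B + 3AB² + B³, and R₃ = (Q₃ + Q₃*)/2. Then R₃ - H³ = (1/4)[X,[X,H]]. -/
open Matrix BigOperators
open scoped ComplexOrder

section

variable {𝕜 R : Type*} [Field 𝕜] [Ring R] [Algebra 𝕜 R]

theorem two_smul_cube_expansion_add_reverse (a b : R) :
    (2 : 𝕜) • ((a ^ 3 + (3 : 𝕜) • (a ^ 2 * b) + (3 : 𝕜) • (a * b ^ 2) + b ^ 3)
        + (a ^ 3 + (3 : 𝕜) • (b * a ^ 2) + (3 : 𝕜) • (b ^ 2 * a) + b ^ 3))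
      - (4 : 𝕜) • (a + b) ^ 3 = ⁅a - b, ⁅a - b, a + b⁆⁆ := by
  simp only [Ring.lie_def, ofNat_smul_eq_nsmul (R := 𝕜)]
  noncomm_ring

theorem half_smul_cube_expansion_add_reverse [NeZero (2 : 𝕜)] (a b : R) :
    (1 / 2 : 𝕜) • ((a ^ 3 + (3 : 𝕜) • (a ^ 2 * b) + (3 : 𝕜) • (a * b ^ 2) + b ^ 3)
        + (a ^ 3 + (3 : 𝕜) • (b * a ^ 2) + (3 : 𝕜) • (b ^ 2 * a) + b ^ 3))
      - (a + b) ^ 3 = (1 / 4 : 𝕜) • ⁅a - b, ⁅a - b, a + b⁆⁆ := by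
  have h4 : (4 : 𝕜) = 2 * 2 := by norm_num
  have hquarter_two : (1 / 4 : 𝕜) * 2 = 1 / 2 := by
    rw [h4]; field_simp [two_ne_zero (α := 𝕜)]
  have hquarter_four : (1 / 4 : 𝕜) * 4 = 1 := by
    rw [h4]; field_simp [two_ne_zero (α := 𝕜)]
  rw [← two_smul_cube_expansion_add_reverse (𝕜 := 𝕜), smul_sub, smul_smul, smul_smul,
    hquarter_two, hquarter_four, one_smul]

variable [StarRing 𝕜] [StarRing R] [StarModule 𝕜 R]

theorem star_cube_expansion {a b : R} (ha : IsSelfAdjoint a) (hb : IsSelfAdjoint b) :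
    star (a ^ 3 + (3 : 𝕜) • (a ^ 2 * b) + (3 : 𝕜) • (a * b ^ 2) + b ^ 3)
      = a ^ 3 + (3 : 𝕜) • (b * a ^ 2) + (3 : 𝕜) • (b ^ 2 * a) + b ^ 3 := by
  simp only [star_add, star_smul, star_mul, star_pow, ha.star_eq, hb.star_eq, star_ofNat]

end

/-- The cubic identity `R₃ - H³ = (1/4)[X,[X,H]]`. -/
theorem cubic_commutator_identity {n : ℕ} (A B : Matrix (Fin n) (Fin n) ℂ)
    (hA : A.IsHermitian) (hB : B.IsHermitian) :
    (1 / 2 : ℂ) • ((A ^ 3 + (3 : ℂ) • (A ^ 2 * B) + (3 : ℂ) • (A * B ^ 2) + B ^ 3)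
        + (A ^ 3 + (3 : ℂ) • (A ^ 2 * B) + (3 : ℂ) • (A * B ^ 2) + B ^ 3)ᴴ)
      - (A + B) ^ 3
    = (1 / 4 : ℂ) •
        ((A - B) * ((A - B) * (A + B) - (A + B) * (A - B))
          - ((A - B) * (A + B) - (A + B) * (A - B)) * (A - B)) := by
  rw [← Matrix.star_eq_conjTranspose, star_cube_expansion hA.isSelfAdjoint hB.isSelfAdjoint]
  simpa only [Ring.lie_def] using half_smul_cube_expansion_add_reverse A B
end

section
/- Let A, B be n×n Hermitian matrices, H = A + B, X = A - B, Q₄ = A⁴ + 4A³B + 6A²B² + 4AB³ + B⁴, and R₄ = (Q₄ + Q₄*)/2. Then R₄ - H⁴ = (1/2)[X,[X,H²]] - (1/4)[X,H]². -/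
open Matrix BigOperators
open scoped ComplexOrder

/-! For Hermitian `A`, `B` the adjoint of `Q₄` is the same binomial expansion with every product
reversed, `A⁴ + 4BA³ + 6B²A² + 4B³A + B⁴`, so `R₄` is the average of the two orderings. The identity
then holds for arbitrary `A`, `B` in any algebra over a field of characteristic `≠ 2`: after
clearing the denominators it is an identity between noncommutative polynomials with integer
coefficients. -/

section Ring

variable {R : Type*} [Ring R]

theorem quartic_add_reverse_identity_nsmul (A B : R) :
    2 • ((A ^ 4 + 4 • (A ^ 3 * B) + 6 • (A ^ 2 * B ^ 2) + 4 • (A * B ^ 3) + B ^ 4)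
        + (A ^ 4 + 4 • (B * A ^ 3) + 6 • (B ^ 2 * A ^ 2) + 4 • (B ^ 3 * A) + B ^ 4))
      - 4 • (A + B) ^ 4
    = 2 • ⁅A - B, ⁅A - B, (A + B) ^ 2⁆⁆ - ⁅A - B, A + B⁆ * ⁅A - B, A + B⁆ := by
  simp only [Ring.lie_def]
  noncomm_ring

variable {𝕜 : Type*} [Field 𝕜] [NeZero (2 : 𝕜)] [Algebra 𝕜 R]

theorem quartic_add_reverse_identity (A B : R) :
    (1 / 2 : 𝕜) • ((A ^ 4 + (4 : 𝕜) • (A ^ 3 * B) + (6 : 𝕜) • (A ^ 2 * B ^ 2)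
          + (4 : 𝕜) • (A * B ^ 3) + B ^ 4)
        + (A ^ 4 + (4 : 𝕜) • (B * A ^ 3) + (6 : 𝕜) • (B ^ 2 * A ^ 2)
          + (4 : 𝕜) • (B ^ 3 * A) + B ^ 4))
      - (A + B) ^ 4
    = (1 / 2 : 𝕜) • ⁅A - B, ⁅A - B, (A + B) ^ 2⁆⁆
      - (1 / 4 : 𝕜) • (⁅A - B, A + B⁆ * ⁅A - B, A + B⁆) := by
  have h := quartic_add_reverse_identity_nsmul A B
  simp only [← ofNat_smul_eq_nsmul 𝕜] at h
  have h4 : (4 : 𝕜) ≠ 0 := by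
    rw [show (4 : 𝕜) = 2 * 2 by norm_num]
    exact mul_ne_zero two_ne_zero two_ne_zero
  linear_combination (norm := match_scalars <;> field_simp <;> ring) (1 / 4 : 𝕜) • h

end Ring

theorem star_quartic_of_isSelfAdjoint {𝕜 R : Type*} [CommSemiring 𝕜] [StarRing 𝕜] [Semiring R]
    [StarRing R] [Module 𝕜 R] [StarModule 𝕜 R] {A B : R}
    (hA : IsSelfAdjoint A) (hB : IsSelfAdjoint B) :
    star (A ^ 4 + (4 : 𝕜) • (A ^ 3 * B) + (6 : 𝕜) • (A ^ 2 * B ^ 2)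
        + (4 : 𝕜) • (A * B ^ 3) + B ^ 4)
      = A ^ 4 + (4 : 𝕜) • (B * A ^ 3) + (6 : 𝕜) • (B ^ 2 * A ^ 2)
        + (4 : 𝕜) • (B ^ 3 * A) + B ^ 4 := by
  simp only [star_add, star_smul, star_mul, star_pow, hA.star_eq, hB.star_eq, star_ofNat]

/-- The quartic identity `R₄ - H⁴ = (1/2)[X,[X,H²]] - (1/4)[X,H]²`. -/
theorem quartic_commutator_identity {n : ℕ} (A B : Matrix (Fin n) (Fin n) ℂ)
    (hA : A.IsHermitian) (hB : B.IsHermitian) :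
    (1 / 2 : ℂ) • ((A ^ 4 + (4 : ℂ) • (A ^ 3 * B) + (6 : ℂ) • (A ^ 2 * B ^ 2)
          + (4 : ℂ) • (A * B ^ 3) + B ^ 4)
        + (A ^ 4 + (4 : ℂ) • (A ^ 3 * B) + (6 : ℂ) • (A ^ 2 * B ^ 2)
          + (4 : ℂ) • (A * B ^ 3) + B ^ 4)ᴴ)
      - (A + B) ^ 4
    = (1 / 2 : ℂ) •
        ((A - B) * ((A - B) * (A + B) ^ 2 - (A + B) ^ 2 * (A - B))
          - ((A - B) * (A + B) ^ 2 - (A + B) ^ 2 * (A - B)) * (A - B))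
      - (1 / 4 : ℂ) •
        (((A - B) * (A + B) - (A + B) * (A - B)) *
          ((A - B) * (A + B) - (A + B) * (A - B))) := by
  have h := quartic_add_reverse_identity (𝕜 := ℂ) A B
  rw [← star_quartic_of_isSelfAdjoint hA.isSelfAdjoint hB.isSelfAdjoint,
    star_eq_conjTranspose] at h
  simpa only [Ring.lie_def] using h
end
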